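/- Let ψ be the cyclic permutation of {1,…,n} given by ψ(i) = i+1 for i < n and ψ(n) = 1. The K-linear map Ψ : Iuₙ → Iuₙ determined on the basis by Ψ(x_{ij}) = x_{ψ(i)ψ(j)}, Ψ(a_i) = a_{ψ(i)}, Ψ(b_i) = b_{ψ(i)} is a Lie algebra automorphism of Iuₙ. -/

import Mathlib

/-- Index set for the basis of `Iuₙ`: the off-diagonal pairs indexing the `x_{ij}` (`i ≠ j`),
then the `a_i`'s, then the `b_i`'s. -/
abbrev IuIdx (n : ℕ) : Type := { p : Fin n × Fin n // p.1 ≠ p.2 } ⊕ (Fin n ⊕ Fin n)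

/-- `Iuₙ`: the free `K`-vector space on the basis `{x_{ij} : i ≠ j} ∪ {a_i} ∪ {b_i}`. -/
abbrev Iu (n : ℕ) (K : Type*) [Field K] : Type _ := IuIdx n →₀ K

variable (n : ℕ) (K : Type*) [Field K]

/-- The basis element `x_{ij}` (`i ≠ j`). -/
noncomputable def xE (i j : Fin n) (h : i ≠ j) : Iu n K :=
  Finsupp.single (Sum.inl ⟨(i, j), h⟩) 1

/-- The basis element `a_i`. -/
noncomputable def aE (i : Fin n) : Iu n K := Finsupp.single (Sum.inr (Sum.inl i)) 1

/-- The basis element `b_i`. -/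
noncomputable def bE (i : Fin n) : Iu n K := Finsupp.single (Sum.inr (Sum.inr i)) 1

/-- `x_{ij}` as a total function (junk value `0` when `i = j`). -/
noncomputable def xe (i j : Fin n) : Iu n K := if h : i ≠ j then xE n K i j h else 0

/-- The length `λ(i,j)`: equals `j - i` if `i < j`, and `n - (i - j)` if `i > j`. -/
def lam (n : ℕ) (i j : Fin n) : ℕ := (j - i : Fin n).val

/-- The bracket of `Iuₙ` on basis elements:
`[x_{ij}, x_{kl}] = δ_{jk} x_{il} - δ_{li} x_{kj}` if `λ(i,j) + λ(k,l) < n` and `0` otherwise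
(unless both `j = k` and `l = i`); `[x_{ij}, x_{ji}] = ½(b_i - b_j)`;
`[a_i, x_{jk}] = (δ_{ij} - δ_{ik}) x_{jk}`; `[b_i, x_{jk}] = 0`;
`[a_i, a_j] = [b_i, b_j] = [a_i, b_j] = 0`; extended antisymmetrically. -/
noncomputable def bb : IuIdx n → IuIdx n → Iu n K
  | Sum.inl ⟨(i, j), _⟩, Sum.inl ⟨(k, l), _⟩ =>
      if k = j ∧ l = i then ((2 : K)⁻¹) • (bE n K i - bE n K j)
      else if lam n i j + lam n k l < n then
        (if j = k then xe n K i l else 0) - (if l = i then xe n K k j else 0)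
      else 0
  | Sum.inr (Sum.inl i), Sum.inl ⟨(j, k), _⟩ =>
      (((if i = j then 1 else 0) : K) - ((if i = k then 1 else 0) : K)) • xe n K j k
  | Sum.inl ⟨(j, k), _⟩, Sum.inr (Sum.inl i) =>
      -((((if i = j then 1 else 0) : K) - ((if i = k then 1 else 0) : K)) • xe n K j k)
  | _, _ => 0

/-- The bilinear bracket of `Iuₙ`, extended bilinearly from its values on basis elements. -/
noncomputable def br : Iu n K →ₗ[K] Iu n K →ₗ[K] Iu n K :=
  Finsupp.lift (Iu n K →ₗ[K] Iu n K) K (IuIdx n) fun s =>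
    Finsupp.lift (Iu n K) K (IuIdx n) fun t => bb n K s t

/-- The linear map `Ψ`, determined on the basis by incrementing all indices by `1` mod `n`
(on `Fin n`, the cyclic permutation `ψ` is `i ↦ i + 1`). -/
noncomputable def Psi [NeZero n] : Iu n K →ₗ[K] Iu n K :=
  Finsupp.lift (Iu n K) K (IuIdx n) fun t =>
    match t with
    | Sum.inl ⟨(i, j), _⟩ => xe n K (i + 1) (j + 1)
    | Sum.inr (Sum.inl i) => aE n K (i + 1)
    | Sum.inr (Sum.inr i) => bE n K (i + 1)

/-! Ψ is the linear map induced by the permutation of the basis that translates every index by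
`1` mod `n`. The structure constants of `Iuₙ` depend on the indices only through equalities
between them and through the cyclic differences `λ(i,j) = j - i mod n`, both of which are
invariant under translation; hence every translation of the indices, Ψ among them, preserves
the bracket. -/

section Shift

variable [NeZero n]

lemma lam_add_right (i j c : Fin n) : lam n (i + c) (j + c) = lam n i j := by
  rw [lam, lam, add_sub_add_right_eq_sub]

def shiftIdx (c : Fin n) : IuIdx n ≃ IuIdx n :=
  Equiv.sumCongr
    ((Equiv.prodCongr (Equiv.addRight c) (Equiv.addRight c)).subtypeEquiv fun _ =>
      (add_left_injective c).ne_iff.symm)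
    (Equiv.sumCongr (Equiv.addRight c) (Equiv.addRight c))

@[simp]
lemma shiftIdx_inl (c i j : Fin n) (h : i ≠ j) :
    shiftIdx n c (Sum.inl ⟨(i, j), h⟩) =
      Sum.inl ⟨(i + c, j + c), (add_left_injective c).ne h⟩ :=
  rfl

@[simp]
lemma shiftIdx_inr_inl (c i : Fin n) :
    shiftIdx n c (Sum.inr (Sum.inl i)) = Sum.inr (Sum.inl (i + c)) :=
  rfl

@[simp]
lemma shiftIdx_inr_inr (c i : Fin n) :
    shiftIdx n c (Sum.inr (Sum.inr i)) = Sum.inr (Sum.inr (i + c)) :=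
  rfl

noncomputable def shift (c : Fin n) : Iu n K ≃ₗ[K] Iu n K :=
  Finsupp.domLCongr (shiftIdx n c)

@[simp]
lemma shift_single (c : Fin n) (t : IuIdx n) (a : K) :
    shift n K c (Finsupp.single t a) = Finsupp.single (shiftIdx n c t) a :=
  Finsupp.domLCongr_single _ _ _

@[simp]
lemma shift_xe (c i j : Fin n) : shift n K c (xe n K i j) = xe n K (i + c) (j + c) := by
  rcases eq_or_ne i j with rfl | h
  · simp [xe]
  · simp [xe, xE, h]

@[simp]
lemma shift_bE (c i : Fin n) : shift n K c (bE n K i) = bE n K (i + c) := by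
  simp [bE]

lemma shift_bb (c : Fin n) (s t : IuIdx n) :
    shift n K c (bb n K s t) = bb n K (shiftIdx n c s) (shiftIdx n c t) := by
  rcases s with ⟨⟨i, j⟩, _⟩ | i | i <;> rcases t with ⟨⟨k, l⟩, _⟩ | m | m <;>
    simp [bb, apply_ite (shift n K c), lam_add_right]

lemma shift_br (c : Fin n) (u v : Iu n K) :
    shift n K c (br n K u v) = br n K (shift n K c u) (shift n K c v) := by
  suffices (br n K).compr₂ (shift n K c).toLinearMap =
      (br n K).compl₁₂ (shift n K c).toLinearMap (shift n K c).toLinearMap from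
    DFunLike.congr_fun (DFunLike.congr_fun this u) v
  refine LinearMap.ext_basis Finsupp.basisSingleOne Finsupp.basisSingleOne fun s t => ?_
  simp [br, shift_bb]

lemma Psi_eq_shift_one : Psi n K = (shift n K 1).toLinearMap := by
  ext t : 2
  rcases t with ⟨⟨i, j⟩, h⟩ | i | i
  · simp [Psi, xe, xE, h]
  · simp [Psi, aE]
  · simp [Psi, bE]

end Shift

theorem stmt1 (n : ℕ) [NeZero n] (K : Type*) [Field K] :
    Function.Bijective (Psi n K) ∧
    ∀ u v : Iu n K, Psi n K (br n K u v) = br n K (Psi n K u) (Psi n K v) := by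
  rw [Psi_eq_shift_one]
  exact ⟨(shift n K 1).bijective, shift_br n K 1⟩
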